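/- A strategy profile ⟨e_k⟩_{k∈ℤ} is a Nash equilibrium of game G₂ if and only if (1) e_k ∈ ℤ/3ℤ for each k ∈ ℤ, and (2) e_{k+2} − e_k ∈ {[0]₃, [1]₃} for each k ∈ ℤ. -/

import Mathlib

structure CellularGame where
  S : Type
  u : S → S → S → ℝ

def NashEq (G : CellularGame) (e : ℤ → G.S) : Prop :=
  ∀ (i : ℤ) (s : G.S), G.u (e (i-1)) s (e (i+1)) ≤ G.u (e (i-1)) (e i) (e (i+1))

def Ichg (G : CellularGame) (a b : ℤ) : Prop :=
  ∀ e₁ e₂ : ℤ → G.S, NashEq G e₁ → NashEq G e₂ →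
    ∃ e : ℤ → G.S, NashEq G e ∧ e a = e₁ a ∧ e b = e₂ b

abbrev G2S := ZMod 3 ⊕ (Bool × Bool)

def u1 (x y z : G2S) : ℝ :=
  match x, y, z with
  | Sum.inl a, Sum.inr _, Sum.inl c => if c = a + 2 then 1 else 0
  | _, Sum.inr _, _ => 1
  | _, _, _ => 0

def u2 (x y : G2S) : ℝ :=
  match x, y with
  | Sum.inr (_, x2), Sum.inr (y1, _) => if x2 = y1 then 1 else 0
  | _, _ => 0

def u3 (y z : G2S) : ℝ :=
  match y, z with
  | Sum.inr (_, y2), Sum.inr (z1, _) => if y2 ≠ z1 then 1 else 0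
  | _, _ => 0

def G2 : CellularGame := ⟨G2S, fun x y z => u1 x y z + u2 x y + u3 y z⟩

/-! A player on `ℤ/3ℤ` always earns `0`, so it is content exactly when its neighbours `x, z` are on
`ℤ/3ℤ` with `z ≠ x + 2`. Two adjacent players on `{head, tail}²` are never both content, and a
player on `ℤ/3ℤ` forces its neighbours onto `ℤ/3ℤ`; hence in an equilibrium everybody plays
`ℤ/3ℤ`, and the condition `e (k+2) ≠ e k + 2` is the statement about differences. -/

open Sum

lemma g2_u_inl (x z : G2S) (b : ZMod 3) : G2.u x (inl b) z = 0 := by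
  cases x <;> cases z <;> simp [G2, u1, u2, u3]

lemma g2_u_inl_inr_inl (a c : ZMod 3) (q : Bool × Bool) :
    G2.u (inl a) (inr q) (inl c) = if c = a + 2 then 1 else 0 := by
  simp [G2, u1, u2, u3]

lemma g2_inl_bestResponse_iff (x z : G2S) (b : ZMod 3) :
    (∀ s, G2.u x s z ≤ G2.u x (inl b) z) ↔ ∃ a c, x = inl a ∧ z = inl c ∧ c ≠ a + 2 := by
  simp only [g2_u_inl]
  constructor
  · intro h
    have h' := h (inr (false, false))
    rcases x with a | ⟨p₁, p₂⟩ <;> rcases z with c | ⟨r₁, r₂⟩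
    · refine ⟨a, c, rfl, rfl, fun hc => ?_⟩
      norm_num [g2_u_inl_inr_inl, hc] at h'
    all_goals
      simp only [G2, u1, u2, u3] at h'
      split_ifs at h' <;> norm_num at h'
  · rintro ⟨a, c, rfl, rfl, hc⟩ (s | q)
    · exact (g2_u_inl _ _ _).le
    · simp [g2_u_inl_inr_inl, hc]

lemma g2_u_lt_of_inr_right_eq (x : G2S) (p r : Bool × Bool) (h : p.2 = r.1) :
    G2.u x (inr p) (inr r) < G2.u x (inr (p.1, !r.1)) (inr r) := by
  obtain ⟨p₁, p₂⟩ := p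
  obtain ⟨r₁, r₂⟩ := r
  subst h
  rcases x with a | ⟨x₁, x₂⟩ <;> simp [G2, u1, u2, u3]

lemma g2_u_lt_of_inr_left_ne (z : G2S) (p q : Bool × Bool) (h : p.2 ≠ q.1) :
    G2.u (inr p) (inr q) z < G2.u (inr p) (inr (p.2, q.2)) z := by
  obtain ⟨p₁, p₂⟩ := p
  obtain ⟨q₁, q₂⟩ := q
  rcases z with c | ⟨z₁, z₂⟩ <;> simp_all [G2, u1, u2, u3]

/-- The left player wants its second coin to differ from the right player's first coin, the right
player wants them equal. -/
lemma g2_not_nashEq_of_inr_inr (e : ℤ → G2.S) (h : NashEq G2 e) (i : ℤ) (p q : Bool × Bool)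
    (hp : e i = inr p) (hq : e (i + 1) = inr q) : False := by
  by_cases hpq : p.2 = q.1
  · have := h i (inr (p.1, !q.1))
    rw [hp, hq] at this
    exact (g2_u_lt_of_inr_right_eq _ p q hpq).not_ge this
  · have := h (i + 1) (inr (p.2, q.2))
    rw [add_sub_cancel_right, hp, hq] at this
    exact (g2_u_lt_of_inr_left_ne _ p q hpq).not_ge this

lemma zmod3_sub_mem_iff (a b : ZMod 3) : a - b ∈ ({0, 1} : Set (ZMod 3)) ↔ a ≠ b + 2 := by
  revert a b
  decide

lemma g2_exists_inl_of_nashEq (e : ℤ → G2.S) (h : NashEq G2 e) (k : ℤ) : ∃ a, e k = inl a := by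
  rcases hk : e k with a | p
  · exact ⟨a, rfl⟩
  rcases hk₁ : e (k + 1) with b | q
  · obtain ⟨a, -, ha, -, -⟩ := (g2_inl_bestResponse_iff _ _ b).1 (hk₁ ▸ h (k + 1))
    rw [add_sub_cancel_right, hk] at ha
    cases ha
  · exact (g2_not_nashEq_of_inr_inr e h k p q hk hk₁).elim

theorem g2_ne (e : ℤ → G2.S) :
    NashEq G2 e ↔ ∃ c : ℤ → ZMod 3, (∀ k : ℤ, e k = Sum.inl (c k)) ∧
      ∀ k : ℤ, c (k+2) - c k ∈ ({0, 1} : Set (ZMod 3)) := by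
  constructor
  · intro h
    choose c hc using g2_exists_inl_of_nashEq e h
    refine ⟨c, hc, fun k => ?_⟩
    obtain ⟨a, b, ha, hb, hab⟩ := (g2_inl_bestResponse_iff _ _ _).1 (hc (k + 1) ▸ h (k + 1))
    rw [add_sub_cancel_right, hc] at ha
    rw [add_assoc, one_add_one_eq_two, hc] at hb
    cases ha; cases hb
    exact (zmod3_sub_mem_iff _ _).2 hab
  · rintro ⟨c, hc, hcond⟩ i
    rw [hc i]
    refine (g2_inl_bestResponse_iff _ _ _).2 ⟨c (i - 1), c (i + 1), hc _, hc _, ?_⟩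
    have := (zmod3_sub_mem_iff _ _).1 (hcond (i - 1))
    rwa [show i - 1 + 2 = i + 1 by ring] at this
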